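/- arXiv:1201.5731 — 2 statements merged into one kernel-verified Lean document; each statement's English description precedes it below -/
import Mathlib

section
/- Let p be a prime with p ≠ 2 and p ≠ 3. Then there exist z, w in the field ℚ₃ of 3-adic numbers such that w² = 3 + 6p²z⁴. -/
/-!
Since `3 ∤ p`, one of `p` and `-p` is `≡ 1 (mod 3)` and hence, by Hensel's lemma, a square `u²`
in `ℤ₃`. Then `z = u⁻¹` makes `p² z⁴ = 1`, and `w = 3` solves `w² = 3 + 6`.
-/

open Polynomial

theorem PadicInt.isSquare_of_norm_sub_one_lt {p : ℕ} [Fact p.Prime] (hp : p ≠ 2) {a : ℤ_[p]}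
    (ha : ‖a - 1‖ < 1) : IsSquare a := by
  have norm_two : ‖(2 : ℤ_[p])‖ = 1 := by
    exact_mod_cast norm_natCast_eq_one_iff.2 ((Nat.coprime_primes Fact.out Nat.prime_two).2 hp)
  have hnorm : ‖(X ^ 2 - C a).aeval (1 : ℤ_[p])‖ <
      ‖(X ^ 2 - C a).derivative.aeval (1 : ℤ_[p])‖ ^ 2 := by
    simpa [one_add_one_eq_two, norm_two, norm_sub_rev] using ha
  obtain ⟨u, hu, -⟩ := hensels_lemma hnorm
  exact ⟨u, by simpa [sub_eq_zero, sq, eq_comm] using hu⟩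

theorem PadicInt.exists_pow_four_eq_sq_of_not_three_dvd {n : ℤ} (hn : ¬ 3 ∣ n) :
    ∃ u : ℤ_[3], u ^ 4 = n ^ 2 := by
  have square_of_dvd (m : ℤ) (hm : 3 ∣ m - 1) : IsSquare (m : ℤ_[3]) :=
    isSquare_of_norm_sub_one_lt (by norm_num) <| by
      exact_mod_cast norm_intCast_lt_one_iff.2 hm
  obtain ⟨u, hu⟩ | ⟨u, hu⟩ : IsSquare (n : ℤ_[3]) ∨ IsSquare ((-n : ℤ) : ℤ_[3]) := by
    rcases (by omega : 3 ∣ n - 1 ∨ 3 ∣ -n - 1) with h | h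
    exacts [.inl (square_of_dvd n h), .inr (square_of_dvd (-n) h)]
  · exact ⟨u, by rw [hu]; ring⟩
  · exact ⟨u, by push_cast at hu; rw [← neg_sq, hu]; ring⟩

theorem C3_solvable_Q3_general (p : ℕ) (hp : p.Prime) (hp3 : p ≠ 3) :
    ∃ z w : ℚ_[3], w ^ 2 = 3 + 6 * (p : ℚ_[3]) ^ 2 * z ^ 4 := by
  have h3 : ¬ (3 : ℤ) ∣ p := by
    exact_mod_cast fun h => hp3 ((Nat.prime_dvd_prime_iff_eq Nat.prime_three hp).1 h).symm
  obtain ⟨u, hu⟩ := PadicInt.exists_pow_four_eq_sq_of_not_three_dvd h3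
  have hu' : (u : ℚ_[3]) ^ 4 = (p : ℚ_[3]) ^ 2 := by
    exact_mod_cast congrArg ((↑) : ℤ_[3] → ℚ_[3]) hu
  have hp0 : (p : ℚ_[3]) ≠ 0 := Nat.cast_ne_zero.2 hp.ne_zero
  refine ⟨(u : ℚ_[3])⁻¹, 3, ?_⟩
  rw [inv_pow, hu', mul_assoc, mul_inv_cancel₀ (pow_ne_zero 2 hp0)]
  norm_num

theorem C3_solvable_Q3 (p : ℕ) (hp : p.Prime) (hp2 : p ≠ 2) (hp3 : p ≠ 3) :
    ∃ z w : ℚ_[3], w ^ 2 = 3 + 6 * (p : ℚ_[3]) ^ 2 * z ^ 4 :=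
  C3_solvable_Q3_general p hp hp3
end

section
/- Let p be a prime with p ≠ 2 and p ≠ 3. Then the equation w² = 3 + 6p²z⁴ has solutions z, w in each of the fields ℚ₂, ℚ₃ and ℚ_p if and only if p is not congruent to 7 or 17 modulo 24. -/
/-!
Over `ℚ₂` and `ℚ₃` there is always the point `z = p`: since `p⁶ ≡ 1 (mod 72)`, the difference
`3² - (3 + 6p⁶) = 6 (1 - p⁶)` is divisible by `6² · 12`, so Hensel's lemma (`|f(3)| < |f'(3)|²`
for `f = X² - 3 - 6p⁶`) applies.

Over `ℚ_p` write `u = p z²`; it has odd valuation and the equation becomes `w² = 3 + 6u²`.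
If `p ∣ u`, reducing mod `p` shows that `3` is a square mod `p`; otherwise `p ∣ u⁻¹` and
`(w u⁻¹)² = 6 + 3u⁻²` shows that `6` is. Conversely Hensel's lemma lifts these square roots
(to points with `z = 0`, resp. `z = 1/p`). By quadratic reciprocity, `3` or `6 = 2 · 3` is a
square mod `p` unless `2` is a square and `3` is not, that is, unless `p ≡ 7, 17 (mod 24)`.
-/

open PadicInt

namespace PadicInt

variable {q : ℕ} [Fact q.Prime]

@[simp, norm_cast]
theorem coe_ofNat (n : ℕ) [n.AtLeastTwo] : ((ofNat(n) : ℤ_[q]) : ℚ_[q]) = ofNat(n) := rfl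

theorem toZMod_eq_zero_iff_norm_lt_one {x : ℤ_[q]} : toZMod x = 0 ↔ ‖x‖ < 1 := by
  rw [← RingHom.mem_ker, ker_toZMod, IsLocalRing.mem_maximalIdeal, mem_nonunits]

theorem norm_eq_one_of_toZMod_ne_zero {x : ℤ_[q]} (hx : toZMod x ≠ 0) : ‖x‖ = 1 :=
  x.norm_le_one.eq_of_not_lt (mt toZMod_eq_zero_iff_norm_lt_one.mpr hx)

open Polynomial in
theorem exists_sq_eq_of_norm_sq_sub_lt {a b : ℤ_[q]} (h : ‖b ^ 2 - a‖ < ‖2 * b‖ ^ 2) :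
    ∃ w : ℤ_[q], w ^ 2 = a := by
  obtain ⟨w, hw, -⟩ :=
    hensels_lemma (F := X ^ 2 - C a) (a := b) (by simpa [one_add_one_eq_two] using h)
  exact ⟨w, by simpa [sub_eq_zero] using hw⟩

theorem exists_sq_eq_of_isSquare_toZMod (hq : q ≠ 2) {a : ℤ_[q]} (ha : toZMod a ≠ 0)
    (h : IsSquare (toZMod a)) : ∃ w : ℤ_[q], w ^ 2 = a := by
  obtain ⟨r, hr⟩ := h
  obtain ⟨b, rfl⟩ := ZMod.ringHom_surjective toZMod r
  have h2 : (2 : ZMod q) ≠ 0 := Ring.two_ne_zero (by rwa [ZMod.ringChar_zmod_n])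
  have hb : toZMod b ≠ 0 := by rintro hb; rw [hb, mul_zero] at hr; exact ha hr
  refine exists_sq_eq_of_norm_sq_sub_lt (b := b) ?_
  have h2b : toZMod (2 * b) ≠ 0 := by rw [map_mul, map_ofNat]; exact mul_ne_zero h2 hb
  rw [norm_eq_one_of_toZMod_ne_zero h2b, one_pow, ← toZMod_eq_zero_iff_norm_lt_one, map_sub,
    map_pow, hr, sq, sub_self]

theorem isSquare_toZMod_of_sq_eq {a : ℤ_[q]} {w : ℚ_[q]} (h : w ^ 2 = a) :
    IsSquare (toZMod a) := by
  have hw : ‖w‖ ≤ 1 := by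
    rw [← pow_le_one_iff_of_nonneg (norm_nonneg w) two_ne_zero, ← norm_pow, h]
    exact a.norm_le_one
  obtain ⟨W, rfl⟩ : ∃ W : ℤ_[q], (W : ℚ_[q]) = w := ⟨⟨w, hw⟩, rfl⟩
  have hW : W ^ 2 = a := PadicInt.ext (by push_cast; exact h)
  exact ⟨toZMod W, by rw [← hW, map_pow, sq]⟩

theorem exists_sq_eq_three_add_six_mul {n : ℤ_[q]} (h : ‖n - 1‖ < ‖(6 : ℤ_[q])‖) :
    ∃ w : ℤ_[q], w ^ 2 = 3 + 6 * n := by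
  refine exists_sq_eq_of_norm_sq_sub_lt (b := 3) ?_
  have h6 : 0 < ‖(6 : ℤ_[q])‖ := norm_pos_iff.mpr (by norm_num)
  calc ‖(3 : ℤ_[q]) ^ 2 - (3 + 6 * n)‖ = ‖(6 : ℤ_[q])‖ * ‖n - 1‖ := by
        rw [← norm_mul, ← norm_neg]; ring_nf
    _ < ‖(6 : ℤ_[q])‖ * ‖(6 : ℤ_[q])‖ := mul_lt_mul_of_pos_left h h6
    _ = ‖2 * (3 : ℤ_[q])‖ ^ 2 := by norm_num [sq]

end PadicInt

theorem Nat.pow_six_modEq_one_of_coprime_six {n : ℕ} (hn : n.Coprime 6) : n ^ 6 ≡ 1 [MOD 72] := by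
  have key : ∀ r < 72, r.Coprime 6 → r ^ 6 % 72 = 1 := by decide
  rw [Nat.ModEq, Nat.pow_mod]
  refine key _ (Nat.mod_lt _ (by norm_num)) ?_
  rwa [Nat.Coprime, Nat.gcd_comm, Nat.gcd_rec, Nat.mod_mod_of_dvd _ (by norm_num : 6 ∣ 72),
    ← Nat.gcd_rec, Nat.gcd_comm]

def HasC3Point (K : Type*) [Semiring K] (p : ℕ) : Prop :=
  ∃ z w : K, w ^ 2 = 3 + 6 * (p : K) ^ 2 * z ^ 4

theorem hasC3Point_of_dvd_six {q : ℕ} [Fact q.Prime] (hq : q ∣ 6) {p : ℕ} (hp : p.Coprime 6) :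
    HasC3Point ℚ_[q] p := by
  have hk : p ^ 6 = 72 * (p ^ 6 / 72) + 1 := by
    have := Nat.pow_six_modEq_one_of_coprime_six hp
    rw [Nat.ModEq] at this
    omega
  set k := p ^ 6 / 72
  have hsub : (p : ℤ_[q]) ^ 6 - 1 = 6 * (12 * k) := by
    rw [sub_eq_iff_eq_add]; exact_mod_cast hk.trans (by ring)
  have h12 : ‖(12 : ℤ_[q])‖ < 1 := by
    exact_mod_cast norm_natCast_lt_one_iff.mpr (hq.trans (by norm_num : 6 ∣ 12))
  obtain ⟨w, hw⟩ := exists_sq_eq_three_add_six_mul (n := (p : ℤ_[q]) ^ 6) <| by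
    have h6 : 0 < ‖(6 : ℤ_[q])‖ := norm_pos_iff.mpr (by norm_num)
    rw [hsub]
    calc ‖(6 : ℤ_[q]) * (12 * k)‖ ≤ ‖(6 : ℤ_[q])‖ * ‖(12 : ℤ_[q])‖ := by
          rw [norm_mul, norm_mul]
          gcongr
          exact mul_le_of_le_one_right (norm_nonneg _) (norm_le_one _)
      _ < ‖(6 : ℤ_[q])‖ := mul_lt_of_lt_one_right h6 h12
  refine ⟨p, w, ?_⟩
  have hw' : (w : ℚ_[q]) ^ 2 = 3 + 6 * (p : ℚ_[q]) ^ 6 := by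
    simpa using congrArg ((↑) : ℤ_[q] → ℚ_[q]) hw
  rw [hw']
  ring

theorem Padic.norm_natCast_self_mul_sq_ne_one {p : ℕ} [Fact p.Prime] (z : ℚ_[p]) :
    ‖(p : ℚ_[p]) * z ^ 2‖ ≠ 1 := by
  rcases eq_or_ne z 0 with rfl | hz
  · simp
  have hp : (1 : ℝ) < p := by exact_mod_cast (Fact.out : p.Prime).one_lt
  rw [norm_mul, norm_pow, Padic.norm_p, Padic.norm_eq_zpow_neg_valuation hz, ← zpow_natCast,
    ← zpow_mul, ← zpow_neg_one, ← zpow_add₀ (by positivity), Ne,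
    zpow_eq_one_iff_right₀ (by positivity) hp.ne']
  omega

section OddPrime

variable {p : ℕ} [Fact p.Prime]

theorem isSquare_three_or_six_of_hasC3Point (h : HasC3Point ℚ_[p] p) :
    IsSquare (3 : ZMod p) ∨ IsSquare (6 : ZMod p) := by
  obtain ⟨z, w, hw⟩ := h
  have hu : w ^ 2 = 3 + 6 * ((p : ℚ_[p]) * z ^ 2) ^ 2 := by rw [hw]; ring
  rcases (Padic.norm_natCast_self_mul_sq_ne_one z).lt_or_gt with hlt | hgt
  · obtain ⟨U, hU⟩ : ∃ U : ℤ_[p], (U : ℚ_[p]) = p * z ^ 2 := ⟨⟨_, hlt.le⟩, rfl⟩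
    have hU0 : toZMod U = 0 := toZMod_eq_zero_iff_norm_lt_one.mpr (by rwa [norm_def, hU])
    have H := isSquare_toZMod_of_sq_eq (a := 3 + 6 * U ^ 2) (w := w)
      (by push_cast; rw [hU, hu])
    left
    simpa [map_ofNat, hU0] using H
  · have hlt : ‖((p : ℚ_[p]) * z ^ 2)⁻¹‖ < 1 := by
      rw [norm_inv]; exact inv_lt_one_of_one_lt₀ hgt
    have hp0 : (p : ℚ_[p]) ≠ 0 := by exact_mod_cast (Fact.out : p.Prime).ne_zero
    have hz : z ≠ 0 := by rintro rfl; norm_num at hgt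
    obtain ⟨T, hT⟩ : ∃ T : ℤ_[p], (T : ℚ_[p]) = ((p : ℚ_[p]) * z ^ 2)⁻¹ := ⟨⟨_, hlt.le⟩, rfl⟩
    have hT0 : toZMod T = 0 := toZMod_eq_zero_iff_norm_lt_one.mpr (by rwa [norm_def, hT])
    have H := isSquare_toZMod_of_sq_eq (a := 6 + 3 * T ^ 2) (w := w * (T : ℚ_[p]))
      (by push_cast; rw [hT, mul_pow, hu]; field_simp; ring)
    right
    simpa [map_ofNat, hT0] using H

theorem hasC3Point_of_isSquare_three_or_six (hp2 : p ≠ 2) (hp3 : p ≠ 3)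
    (h : IsSquare (3 : ZMod p) ∨ IsSquare (6 : ZMod p)) : HasC3Point ℚ_[p] p := by
  have h3 : (3 : ZMod p) ≠ 0 := by exact_mod_cast ZMod.prime_ne_zero p 3 hp3
  have h6 : (6 : ZMod p) ≠ 0 := by
    have h2 : (2 : ZMod p) ≠ 0 := by exact_mod_cast ZMod.prime_ne_zero p 2 hp2
    simpa [show (6 : ZMod p) = 2 * 3 by norm_num] using mul_ne_zero h2 h3
  rcases h with h | h
  · obtain ⟨w, hw⟩ :=
      exists_sq_eq_of_isSquare_toZMod hp2 (a := 3) (by rwa [map_ofNat]) (by rwa [map_ofNat])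
    refine ⟨0, w, ?_⟩
    simpa using congrArg ((↑) : ℤ_[p] → ℚ_[p]) hw
  · obtain ⟨w, hw⟩ := exists_sq_eq_of_isSquare_toZMod hp2 (a := 6 + 3 * p ^ 2)
      (by simpa [map_ofNat]) (by simpa [map_ofNat])
    have hw' : (w : ℚ_[p]) ^ 2 = 6 + 3 * p ^ 2 := by
      simpa using congrArg ((↑) : ℤ_[p] → ℚ_[p]) hw
    have hp0 : (p : ℚ_[p]) ≠ 0 := by exact_mod_cast (Fact.out : p.Prime).ne_zero
    refine ⟨(p : ℚ_[p])⁻¹, w / p, ?_⟩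
    field_simp
    linear_combination hw'

theorem hasC3Point_self_iff (hp2 : p ≠ 2) (hp3 : p ≠ 3) :
    HasC3Point ℚ_[p] p ↔ IsSquare (3 : ZMod p) ∨ IsSquare (6 : ZMod p) :=
  ⟨isSquare_three_or_six_of_hasC3Point, hasC3Point_of_isSquare_three_or_six hp2 hp3⟩

end OddPrime

theorem FiniteField.isSquare_mul_iff_of_ne_zero {F : Type*} [Field F] [Finite F] {a b : F}
    (ha : a ≠ 0) (hb : b ≠ 0) : IsSquare (a * b) ↔ (IsSquare a ↔ IsSquare b) := by
  classical
  have := Fintype.ofFinite F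
  rw [← quadraticChar_one_iff_isSquare (mul_ne_zero ha hb), ← quadraticChar_one_iff_isSquare ha,
    ← quadraticChar_one_iff_isSquare hb, map_mul]
  rcases quadraticChar_dichotomy ha with h | h <;>
    rcases quadraticChar_dichotomy hb with h' | h' <;> simp [h, h']

theorem ZMod.isSquare_natCast_three_iff (n : ℕ) : IsSquare (n : ZMod 3) ↔ n % 3 ≠ 2 := by
  rw [← ZMod.natCast_mod]
  have : n % 3 < 3 := Nat.mod_lt n (by norm_num)
  interval_cases n % 3 <;> decide

theorem ZMod.isSquare_three_iff {p : ℕ} [Fact p.Prime] (hp2 : p ≠ 2) (hp3 : p ≠ 3) :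
    IsSquare (3 : ZMod p) ↔ p % 12 = 1 ∨ p % 12 = 11 := by
  have : Fact (Nat.Prime 3) := ⟨Nat.prime_three⟩
  have hodd : p % 2 = 1 := Nat.odd_iff.mp ((Fact.out : p.Prime).odd_of_ne_two hp2)
  have h3 : p % 3 ≠ 0 := fun h =>
    hp3 ((Nat.prime_dvd_prime_iff_eq Nat.prime_three Fact.out).mp (Nat.dvd_of_mod_eq_zero h)).symm
  rw [← Nat.cast_ofNat]
  rcases Nat.odd_mod_four_iff.mp hodd with h4 | h4
  · rw [ZMod.exists_sq_eq_prime_iff_of_mod_four_eq_one h4 (by norm_num),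
      isSquare_natCast_three_iff]
    omega
  · rw [ZMod.exists_sq_eq_prime_iff_of_mod_four_eq_three h4 (by norm_num) hp3,
      isSquare_natCast_three_iff]
    omega

theorem ZMod.isSquare_six_iff {p : ℕ} [Fact p.Prime] (hp2 : p ≠ 2) (hp3 : p ≠ 3) :
    IsSquare (6 : ZMod p) ↔ (IsSquare (2 : ZMod p) ↔ IsSquare (3 : ZMod p)) := by
  rw [show (6 : ZMod p) = 2 * 3 by norm_num]
  exact FiniteField.isSquare_mul_iff_of_ne_zero (by exact_mod_cast ZMod.prime_ne_zero p 2 hp2)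
    (by exact_mod_cast ZMod.prime_ne_zero p 3 hp3)

theorem C3_locally_solvable_iff (p : ℕ) [Fact p.Prime] (hp2 : p ≠ 2) (hp3 : p ≠ 3) :
    ((∃ z w : ℚ_[2], w ^ 2 = 3 + 6 * (p : ℚ_[2]) ^ 2 * z ^ 4) ∧
      (∃ z w : ℚ_[3], w ^ 2 = 3 + 6 * (p : ℚ_[3]) ^ 2 * z ^ 4) ∧
      (∃ z w : ℚ_[p], w ^ 2 = 3 + 6 * (p : ℚ_[p]) ^ 2 * z ^ 4)) ↔
      ¬(p % 24 = 7 ∨ p % 24 = 17) := by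
  have hp : p.Prime := Fact.out
  have hcop3 : p.Coprime 3 := (Nat.coprime_primes hp Nat.prime_three).mpr hp3
  have hcop : p.Coprime 6 :=
    Nat.Coprime.mul_right ((Nat.coprime_primes hp Nat.prime_two).mpr hp2) hcop3
  have h3 : ¬3 ∣ p := (Nat.Prime.coprime_iff_not_dvd Nat.prime_three).mp hcop3.symm
  change HasC3Point ℚ_[2] p ∧ HasC3Point ℚ_[3] p ∧ HasC3Point ℚ_[p] p ↔ _
  rw [and_iff_right (hasC3Point_of_dvd_six (by norm_num) hcop),
    and_iff_right (hasC3Point_of_dvd_six (by norm_num) hcop),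
    hasC3Point_self_iff hp2 hp3, ZMod.isSquare_six_iff hp2 hp3,
    ZMod.exists_sq_eq_two_iff hp2, ZMod.isSquare_three_iff hp2 hp3]
  omega
end
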